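/- For 0 < m < 1, the function ψ(u) = u / ((1 − m²u²)·artanh(mu)) is strictly increasing on the interval (0, 1). -/

import Mathlib

/-- The inverse hyperbolic tangent, `artanh(x) = (1/2)·log((1+x)/(1−x))` for `|x| < 1`. -/
noncomputable def artanh (x : ℝ) : ℝ := (1 / 2) * Real.log ((1 + x) / (1 - x))

lemma hasDerivAt_artanh {x : ℝ} (h1 : -1 < x) (h2 : x < 1) :
    HasDerivAt artanh (1 / (1 - x ^ 2)) x := by
  have h1x : (0:ℝ) < 1 + x := by linarith
  have h2x : (0:ℝ) < 1 - x := by linarith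
  have hA : HasDerivAt (fun y : ℝ => Real.log (1 + y)) (1 / (1 + x)) x := by
    have := (Real.hasDerivAt_log (ne_of_gt h1x)).comp x ((hasDerivAt_id x).const_add 1)
    simpa [one_div, Function.comp_def] using this
  have hB : HasDerivAt (fun y : ℝ => Real.log (1 - y)) (-(1 / (1 - x))) x := by
    have h := (Real.hasDerivAt_log (ne_of_gt h2x)).comp x ((hasDerivAt_id x).const_sub 1)
    exact h.congr_deriv (by rw [one_div]; ring)
  have hf : HasDerivAt (fun y : ℝ => (1/2 : ℝ) * (Real.log (1 + y) - Real.log (1 - y)))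
      ((1/2) * (1 / (1 + x) - -(1 / (1 - x)))) x := (hA.sub hB).const_mul (1/2)
  have heq : (fun y : ℝ => (1/2 : ℝ) * (Real.log (1 + y) - Real.log (1 - y))) =ᶠ[nhds x]
      artanh := by
    filter_upwards [Ioo_mem_nhds h1 h2] with y hy
    have hy1 : (0:ℝ) < 1 + y := by linarith [hy.1]
    have hy2 : (0:ℝ) < 1 - y := by linarith [hy.2]
    unfold artanh
    rw [Real.log_div (ne_of_gt hy1) (ne_of_gt hy2)]
  have := hf.congr_of_eventuallyEq heq.symm
  refine this.congr_deriv ?_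
  have hne : (1:ℝ) - x ^ 2 ≠ 0 := by nlinarith
  field_simp
  ring

lemma artanh_zero : artanh 0 = 0 := by simp [artanh]

lemma lt_artanh {x : ℝ} (h0 : 0 < x) (h1 : x < 1) : x < artanh x := by
  have key : StrictMonoOn (fun y : ℝ => artanh y - y) (Set.Ico 0 1) := by
    apply strictMonoOn_of_deriv_pos (convex_Ico 0 1)
    · intro y hy
      have hy1 : (-1:ℝ) < y := by linarith [hy.1]
      exact (((hasDerivAt_artanh hy1 hy.2).sub (hasDerivAt_id' y)).continuousAt).continuousWithinAt
    · intro y hy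
      rw [interior_Ico] at hy
      have hy1 : (-1:ℝ) < y := by linarith [hy.1]
      have hD := (hasDerivAt_artanh hy1 hy.2).sub (hasDerivAt_id' y)
      rw [show deriv (fun y => artanh y - y) y = _ from hD.deriv]
      have hsq : 0 < 1 - y ^ 2 := by nlinarith [hy.1, hy.2]
      have hsq2 : 1 - y ^ 2 < 1 := by nlinarith [hy.1]
      have : 1 < 1 / (1 - y ^ 2) := (one_lt_div hsq).mpr hsq2
      linarith
  have := key (Set.left_mem_Ico.mpr one_pos) ⟨le_of_lt h0, h1⟩ h0
  simp [artanh_zero] at this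
  linarith

lemma artanh_pos {x : ℝ} (h0 : 0 < x) (h1 : x < 1) : 0 < artanh x :=
  lt_trans h0 (lt_artanh h0 h1)

/-- for fixed `m ∈ (0,1)`, `ψ(u) = u / ((1 − m²u²)·artanh(mu))` is strictly
increasing on `(0, 1)`. -/
theorem stmt5 (m : ℝ) (hm : m ∈ Set.Ioo (0 : ℝ) 1) :
    StrictMonoOn (fun u : ℝ => u / ((1 - m ^ 2 * u ^ 2) * artanh (m * u)))
      (Set.Ioo 0 1) := by
  obtain ⟨hm0, hm1⟩ := hm
  -- derivative data at each point
  have key : ∀ u ∈ Set.Ioo (0:ℝ) 1, ∃ d,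
      HasDerivAt (fun u : ℝ => u / ((1 - m ^ 2 * u ^ 2) * artanh (m * u))) d u ∧ 0 < d := by
    intro u hu
    obtain ⟨hu0, hu1⟩ := hu
    have hx0 : 0 < m * u := mul_pos hm0 hu0
    have hx1 : m * u < 1 := by nlinarith
    have hxm1 : (-1:ℝ) < m * u := by linarith
    have hsq : 0 < 1 - m ^ 2 * u ^ 2 := by nlinarith
    have hsq' : 1 - (m * u) ^ 2 = 1 - m ^ 2 * u ^ 2 := by ring
    have hart : 0 < artanh (m * u) := artanh_pos hx0 hx1
    have hartgt : m * u < artanh (m * u) := lt_artanh hx0 hx1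
    -- derivative of the denominator
    have hA : HasDerivAt (fun u : ℝ => 1 - m ^ 2 * u ^ 2) (-(m ^ 2 * (2 * u))) u := by
      have := ((hasDerivAt_pow 2 u).const_mul (m ^ 2)).const_sub 1
      simpa [mul_comm, mul_assoc, mul_left_comm] using this
    have hB : HasDerivAt (fun u : ℝ => artanh (m * u)) (1 / (1 - m ^ 2 * u ^ 2) * m) u := by
      have := (hasDerivAt_artanh hxm1 hx1).comp u ((hasDerivAt_id u).const_mul m)
      simpa [hsq', mul_comm, Function.comp_def] using this
    have hD : HasDerivAt (fun u : ℝ => (1 - m ^ 2 * u ^ 2) * artanh (m * u))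
        ((-(m ^ 2 * (2 * u))) * artanh (m * u)
          + (1 - m ^ 2 * u ^ 2) * (1 / (1 - m ^ 2 * u ^ 2) * m)) u := hA.mul hB
    have hDpos : 0 < (1 - m ^ 2 * u ^ 2) * artanh (m * u) := mul_pos hsq hart
    have hf := (hasDerivAt_id' u).div hD (ne_of_gt hDpos)
    refine ⟨_, hf, ?_⟩
    apply div_pos
    · have hnum : 1 * ((1 - m ^ 2 * u ^ 2) * artanh (m * u))
          - u * ((-(m ^ 2 * (2 * u))) * artanh (m * u)
            + (1 - m ^ 2 * u ^ 2) * (1 / (1 - m ^ 2 * u ^ 2) * m))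
          = (1 + m ^ 2 * u ^ 2) * artanh (m * u) - m * u := by
        field_simp
        ring
      rw [hnum]
      nlinarith [mul_pos (mul_pos (mul_pos hm0 hm0) (mul_pos hu0 hu0)) hart]
    · positivity
  apply strictMonoOn_of_deriv_pos (convex_Ioo 0 1)
  · intro u hu
    obtain ⟨d, hd, _⟩ := key u hu
    exact hd.continuousAt.continuousWithinAt
  · intro u hu
    rw [interior_Ioo] at hu
    obtain ⟨d, hd, hdpos⟩ := key u hu
    rwa [hd.deriv]
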